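/- Let φ : [0,2R] → ℝ be C² with φ'' ≤ 0 on (0,R), φ ≡ h on [0,R₁] for some 0 < R₁ < R, and h > 0. Then ∫₀^R r·|W(r)| dr ≥ −R·φ'(R)/√(1+(φ'(R))²) + 2∫₀^R φ'/√(1+(φ')²) dr, where |W(r)| = √((φ''/(1+(φ')²)^{3/2})² + (φ'/(r√(1+(φ')²)))²). -/

import Mathlib

/-!
Only the meridian term of `|W|` is needed: `r |W(r)| ≥ -r κ(r)` with `κ = φ''/(1+φ'²)^{3/2}`,
the derivative of `G = φ'/√(1+φ'²)`. Integration by parts gives `∫ r κ = R G(R) - ∫ G`, and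
`∫ G ≤ 0` because `φ' ≤ 0`, so `-R G(R) + ∫ G ≥ -R G(R) + 2 ∫ G`. All integrands vanish on the
flat part `(0, R₁)`, so the integrals may start at any `c ∈ (0, R₁)`, where `φ` is `C²` and
`G(c) = 0`; this sidesteps the endpoint `0`, where the two-sided `deriv φ` is not controlled.
-/

open MeasureTheory intervalIntegral

open Set Filter Topology

theorem deriv_eventuallyEq_zero {f : ℝ → ℝ} {x c : ℝ} (h : f =ᶠ[𝓝 x] fun _ => c) :
    deriv f =ᶠ[𝓝 x] 0 :=
  (by simpa using h.deriv : deriv f =ᶠ[𝓝 x] fun _ => 0)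

theorem integral_eq_integral_of_eqOn_Ioc_zero {f : ℝ → ℝ} {a b c : ℝ} (hac : a ≤ c) (hcb : c ≤ b)
    (hf : EqOn f 0 (Ioc a c)) : ∫ x in a..b, f x = ∫ x in c..b, f x := by
  rw [integral_of_le (hac.trans hcb), integral_of_le hcb]
  refine setIntegral_eq_of_subset_of_forall_sdiff_eq_zero measurableSet_Ioc
    (Ioc_subset_Ioc_left hac) fun x hx => hf ⟨hx.1.1, not_lt.1 fun hcx => hx.2 ⟨hcx, hx.1.2⟩⟩

theorem hasDerivAt_div_sqrt_one_add_sq (t : ℝ) :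
    HasDerivAt (fun s : ℝ => s / √(1 + s ^ 2)) ((1 + t ^ 2) ^ ((3 : ℝ) / 2))⁻¹ t := by
  have hpos : 0 < 1 + t ^ 2 := by positivity
  have hsqrt : HasDerivAt (fun s : ℝ => √(1 + s ^ 2)) (t / √(1 + t ^ 2)) t := by
    convert ((hasDerivAt_pow 2 t).const_add 1).sqrt hpos.ne' using 1
    field_simp
    push_cast
    ring
  refine ((hasDerivAt_id t).div hsqrt (Real.sqrt_pos.2 hpos).ne').congr_deriv ?_
  rw [show (3 : ℝ) / 2 = 1 + 1 / 2 by norm_num, Real.rpow_add hpos, Real.rpow_one,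
    ← Real.sqrt_eq_rpow]
  field_simp
  rw [Real.sq_sqrt hpos.le]
  simp only [id]
  ring

theorem HasDerivAt.div_sqrt_one_add_sq {f : ℝ → ℝ} {f' x : ℝ} (hf : HasDerivAt f f' x) :
    HasDerivAt (fun s => f s / √(1 + f s ^ 2)) (f' / (1 + f x ^ 2) ^ ((3 : ℝ) / 2)) x :=
  ((hasDerivAt_div_sqrt_one_add_sq (f x)).comp x hf).congr_deriv (inv_mul_eq_div _ _)

theorem neg_mul_le_mul_sqrt_sq_add_sq {r : ℝ} (hr : 0 ≤ r) (x y : ℝ) :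
    -(r * x) ≤ r * √(x ^ 2 + y ^ 2) := by
  rw [← mul_neg]
  exact mul_le_mul_of_nonneg_left
    ((neg_le_abs x).trans (Real.abs_le_sqrt (le_add_of_nonneg_right (sq_nonneg y)))) hr

section

variable {f f' : ℝ → ℝ} {a b : ℝ}

theorem integral_mul_div_one_add_sq_rpow_eq (hf : ∀ x ∈ uIcc a b, HasDerivAt f (f' x) x)
    (hf' : IntervalIntegrable f' volume a b) :
    ∫ x in a..b, x * (f' x / (1 + f x ^ 2) ^ ((3 : ℝ) / 2)) =
      b * (f b / √(1 + f b ^ 2)) - a * (f a / √(1 + f a ^ 2))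
        - ∫ x in a..b, f x / √(1 + f x ^ 2) := by
  have hcont : ContinuousOn f (uIcc a b) := fun x hx => (hf x hx).continuousAt.continuousWithinAt
  have hint : IntervalIntegrable (fun x => f' x / (1 + f x ^ 2) ^ ((3 : ℝ) / 2)) volume a b := by
    simp only [div_eq_mul_inv]
    refine hf'.mul_continuousOn ?_
    fun_prop (disch := intros; positivity)
  simpa using integral_mul_deriv_eq_deriv_mul (fun x _ => hasDerivAt_id x)
    (fun x hx => (hf x hx).div_sqrt_one_add_sq) intervalIntegrable_const hint

theorem integral_mul_sqrt_sq_add_sq_ge (ha : 0 < a) (hab : a ≤ b)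
    (hf : ∀ x ∈ Icc a b, HasDerivAt f (f' x) x) (hf' : ContinuousOn f' (Icc a b)) :
    a * (f a / √(1 + f a ^ 2)) - b * (f b / √(1 + f b ^ 2))
        + ∫ x in a..b, f x / √(1 + f x ^ 2) ≤
      ∫ x in a..b, x * √((f' x / (1 + f x ^ 2) ^ ((3 : ℝ) / 2)) ^ 2
        + (f x / (x * √(1 + f x ^ 2))) ^ 2) := by
  have hcont : ContinuousOn f (Icc a b) := fun x hx => (hf x hx).continuousAt.continuousWithinAt
  have hne : ∀ x ∈ Icc a b, x * √(1 + f x ^ 2) ≠ 0 := fun x hx => by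
    have := ha.trans_le hx.1
    positivity
  calc _ = ∫ x in a..b, -(x * (f' x / (1 + f x ^ 2) ^ ((3 : ℝ) / 2))) := by
        rw [intervalIntegral.integral_neg, integral_mul_div_one_add_sq_rpow_eq
          (by rwa [uIcc_of_le hab]) (hf'.intervalIntegrable_of_Icc hab)]
        ring
    _ ≤ _ := by
      refine integral_mono_on hab (ContinuousOn.intervalIntegrable_of_Icc hab ?_).neg
        (ContinuousOn.intervalIntegrable_of_Icc hab ?_)
        fun x hx => neg_mul_le_mul_sqrt_sq_add_sq (ha.le.trans hx.1) _ _
      · fun_prop (disch := intros; positivity)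
      · fun_prop (disch := first | assumption | intros; positivity)

end

theorem weingarten_integral_lower_bound_general
    (R R₁ h : ℝ) (hR₁ : 0 < R₁) (hR₁R : R₁ < R)
    (φ : ℝ → ℝ) (hφ : ContDiffOn ℝ 2 φ (Set.Icc 0 (2*R)))
    (hconst : ∀ r ∈ Set.Icc 0 R₁, φ r = h)
    (hφ'neg : ∀ r ∈ Set.Ico 0 R, deriv φ r ≤ 0) :
    (∫ r in (0:ℝ)..R,
        r * Real.sqrt ((deriv (deriv φ) r / (1 + (deriv φ r)^2) ^ ((3:ℝ)/2))^2
          + (deriv φ r / (r * Real.sqrt (1 + (deriv φ r)^2)))^2))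
      ≥ -R * deriv φ R / Real.sqrt (1 + (deriv φ R)^2)
        + 2 * ∫ r in (0:ℝ)..R, deriv φ r / Real.sqrt (1 + (deriv φ r)^2) := by
  obtain ⟨c, hc, hcR₁⟩ : ∃ c, 0 < c ∧ c < R₁ := ⟨R₁ / 2, by positivity, by linarith⟩
  have hcR : c ≤ R := (hcR₁.trans hR₁R).le
  have hflat : ∀ r ∈ Ioc 0 c, deriv φ r = 0 ∧ deriv (deriv φ) r = 0 := fun r hr => by
    have hφ' := deriv_eventuallyEq_zero (eventually_of_mem (Ioo_mem_nhds hr.1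
      (hr.2.trans_lt hcR₁)) fun x hx => hconst x (Ioo_subset_Icc_self hx))
    exact ⟨hφ'.eq_of_nhds, (deriv_eventuallyEq_zero hφ').eq_of_nhds⟩
  have hC1 : ContDiffOn ℝ 1 (deriv φ) (Ioo 0 (2 * R)) :=
    (hφ.mono Ioo_subset_Icc_self).deriv_of_isOpen isOpen_Ioo (by norm_num)
  have hsub : Icc c R ⊆ Ioo 0 (2 * R) := Icc_subset_Ioo hc (by linarith)
  have key := integral_mul_sqrt_sq_add_sq_ge hc hcR
    (fun r hr => ((hC1.differentiableOn one_ne_zero).differentiableAt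
      (isOpen_Ioo.mem_nhds (hsub hr))).hasDerivAt)
    ((hC1.continuousOn_deriv_of_isOpen isOpen_Ioo le_rfl).mono hsub)
  have hslope : ∫ r in c..R, deriv φ r / √(1 + deriv φ r ^ 2) ≤ 0 := by
    rw [integral_of_le hcR, integral_Ioc_eq_integral_Ioo]
    exact setIntegral_nonpos measurableSet_Ioo fun r hr =>
      div_nonpos_of_nonpos_of_nonneg (hφ'neg r ⟨hc.le.trans hr.1.le, hr.2⟩) (Real.sqrt_nonneg _)
  rw [integral_eq_integral_of_eqOn_Ioc_zero hc.le hcR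
      fun r hr => by simp [(hflat r hr).1, (hflat r hr).2],
    integral_eq_integral_of_eqOn_Ioc_zero hc.le hcR
      fun r hr => by simp [(hflat r hr).1]]
  simp only [(hflat c ⟨hc, le_rfl⟩).1, zero_div, mul_zero, zero_sub] at key
  linear_combination key + hslope

/-- lower bound for `∫₀^R r·|W(r)| dr` for a radially symmetric concave cap. -/
theorem weingarten_integral_lower_bound
    (R R₁ h : ℝ) (hR : 0 < R) (hR₁ : 0 < R₁) (hR₁R : R₁ < R) (hh : 0 < h)
    (φ : ℝ → ℝ) (hφ : ContDiffOn ℝ 2 φ (Set.Icc 0 (2*R)))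
    (hconc : ∀ r ∈ Set.Ioo 0 R, deriv (deriv φ) r ≤ 0)
    (hconst : ∀ r ∈ Set.Icc 0 R₁, φ r = h)
    (hφ'0 : deriv φ 0 = 0)
    (hφ'neg : ∀ r ∈ Set.Ico 0 R, deriv φ r ≤ 0) :
    (∫ r in (0:ℝ)..R,
        r * Real.sqrt ((deriv (deriv φ) r / (1 + (deriv φ r)^2) ^ ((3:ℝ)/2))^2
          + (deriv φ r / (r * Real.sqrt (1 + (deriv φ r)^2)))^2))
      ≥ -R * deriv φ R / Real.sqrt (1 + (deriv φ R)^2)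
        + 2 * ∫ r in (0:ℝ)..R, deriv φ r / Real.sqrt (1 + (deriv φ r)^2) :=
  weingarten_integral_lower_bound_general R R₁ h hR₁ hR₁R φ hφ hconst hφ'neg
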